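/- arXiv:2010.07507 — 4 statements merged into one kernel-verified Lean document; each statement's English description precedes it below -/
import Mathlib

section
/- Let (O, m) be a Noetherian local ring and let π ∈ m be an element that is not a zero divisor in O. If O is not reduced (i.e. O contains a nonzero nilpotent element), then the quotient ring O/πO is not reduced. -/
/-! A nonzero square-zero element `y` of `O` can, by Krull's intersection theorem, be written
`y = π ^ n * c` with `π ∤ c`. Since `π` is a non-zerodivisor, `c ^ 2 = 0` as well, so the class
of `c` is a nonzero square-zero element of `O ⧸ (π)`. -/

open IsLocalRing

theorem finiteMultiplicity_of_mem_maximalIdeal {R : Type*} [CommRing R] [IsNoetherianRing R]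
    [IsLocalRing R] {π y : R} (hπ : π ∈ maximalIdeal R) (hy : y ≠ 0) :
    FiniteMultiplicity π y := by
  have hspan : Ideal.span {π} ≠ ⊤ := Ideal.span_singleton_ne_top ((mem_maximalIdeal π).mp hπ)
  by_contra hinf
  rw [FiniteMultiplicity.not_iff_forall] at hinf
  have hmem : y ∈ ⨅ n : ℕ, Ideal.span {π} ^ n := Ideal.mem_iInf.mpr fun n ↦ by
    rw [Ideal.span_singleton_pow, Ideal.mem_span_singleton]
    exact hinf n
  rw [Ideal.iInf_pow_eq_bot_of_isLocalRing _ hspan, Ideal.mem_bot] at hmem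
  exact hy hmem

theorem sq_eq_zero_of_mul_sq_eq_zero {R : Type*} [CommMonoidWithZero R] {a b : R}
    (ha : a ∈ nonZeroDivisors R) (h : (a * b) ^ 2 = 0) : b ^ 2 = 0 := by
  rw [mul_pow] at h
  exact (mem_nonZeroDivisors_iff_right.mp (pow_mem ha 2)) _ (by rwa [mul_comm])

/-- Let `(O, m)` be a Noetherian local ring and let `π ∈ m` be a
non-zerodivisor of `O`. If `O` is not reduced, then `O ⧸ (π)` is not reduced. -/
theorem quotient_not_reduced_of_not_reduced
    (O : Type*) [CommRing O] [IsNoetherianRing O] [IsLocalRing O]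
    (π : O) (hπ : π ∈ IsLocalRing.maximalIdeal O) (hreg : π ∈ nonZeroDivisors O)
    (hO : ¬ IsReduced O) :
    ¬ IsReduced (O ⧸ Ideal.span ({π} : Set O)) := by
  rw [isReduced_iff_pow_one_lt 2 one_lt_two] at hO ⊢
  intro hred
  refine hO fun y hy ↦ by_contra fun hy0 ↦ ?_
  obtain ⟨c, hyc, hc⟩ :=
    (finiteMultiplicity_of_mem_maximalIdeal hπ hy0).exists_eq_pow_mul_and_not_dvd
  have hc2 : c ^ 2 = 0 := sq_eq_zero_of_mul_sq_eq_zero (pow_mem hreg _) (hyc ▸ hy)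
  have hc0 := hred (Ideal.Quotient.mk _ c) (by rw [← map_pow, hc2, map_zero])
  exact hc (Ideal.mem_span_singleton.mp (Ideal.Quotient.eq_zero_iff_mem.mp hc0))
end

section
/- Let k be a field of prime characteristic p and let R = k[a,b,y]/(a^p + b^p·y) be the quotient of the polynomial ring in three variables a, b, y by the principal ideal generated by a^p + b^p·y. Then R is an integral domain and R is not integrally closed in its field of fractions; explicitly, the element a/b of Frac(R) is integral over R (it satisfies T^p + y = 0) but does not lie in R. -/
/-!
`a^p + b^p·y` is linear in `y` with coprime coefficients `b^p, a^p` over the UFD `k[a,b]`, hence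
prime, so `R` is a domain. In `Frac R` the element `t = a/b` satisfies `t^p = -y`, so it is
integral over `R`. It is not in `R`: `a ∈ bR` would mean `a ∈ (b, a^p + b^p·y)`, and setting
`b = y = 0` would give `a ∈ (a^p)` in `k[a]`, impossible for `p ≥ 2`.
-/

open MvPolynomial

set_option synthInstance.maxHeartbeats 400000
set_option maxHeartbeats 1000000

/-- The ring `R = k[a,b,y]/(a^p + b^p·y)`, where the variables `X 0, X 1, X 2` of the
polynomial ring play the roles of `a, b, y` respectively. -/
abbrev ExampleRing (k : Type*) [Field k] (p : ℕ) : Type _ :=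
  MvPolynomial (Fin 3) k ⧸ Ideal.span {(X 0 ^ p + X 1 ^ p * X 2 : MvPolynomial (Fin 3) k)}

theorem MvPolynomial.prime_X_pow_add_X_pow_mul_X {σ R : Type*} [CommRing R] [IsDomain R]
    [UniqueFactorizationMonoid R] {i j l : σ} (hij : i ≠ j) (hil : i ≠ l) (hjl : j ≠ l)
    (m n : ℕ) : Prime (X i ^ m + X j ^ n * X l : MvPolynomial σ R) := by
  classical
  have hvars (s : σ) (e : ℕ) (hs : l ≠ s) : l ∉ (X s ^ e : MvPolynomial σ R).vars :=
    fun h => hs (by simpa using vars_pow (X s) e h)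
  rw [add_comm, ← UniqueFactorizationMonoid.irreducible_iff_prime]
  have hcoprime : IsRelPrime (X j ^ n : MvPolynomial σ R) (X i ^ m) :=
    (X_prime.irreducible.isRelPrime_iff_not_dvd.mpr (by simpa using hij)).symm.pow
  exact irreducible_mul_X_add _ _ l (pow_ne_zero _ (X_ne_zero j)) (hvars j n hjl.symm)
    (hvars i m hil.symm) hcoprime

theorem Ideal.Quotient.not_mk_span_singleton_dvd {A B : Type*} [CommRing A] [CommRing B]
    (φ : A →+* B) {f a b : A} (hb : φ b = 0) (ha : ¬ φ f ∣ φ a) :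
    ¬ Ideal.Quotient.mk (Ideal.span {f}) b ∣ Ideal.Quotient.mk (Ideal.span {f}) a := by
  rintro ⟨c, hc⟩
  obtain ⟨c, rfl⟩ := Ideal.Quotient.mk_surjective c
  rw [← map_mul, Ideal.Quotient.eq, Ideal.mem_span_singleton] at hc
  exact ha (by simpa [hb] using map_dvd φ hc)

theorem IsFractionRing.div_mem_range_iff_dvd {R K : Type*} [CommRing R] [Field K] [Algebra R K]
    [IsFractionRing R K] {a b : R} (hb : b ≠ 0) :
    algebraMap R K a / algebraMap R K b ∈ (algebraMap R K).range ↔ b ∣ a := by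
  have hb' : algebraMap R K b ≠ 0 := (map_ne_zero_iff _ (IsFractionRing.injective R K)).mpr hb
  constructor
  · rintro ⟨c, hc⟩
    refine ⟨c, IsFractionRing.injective R K ?_⟩
    rw [map_mul, hc, mul_div_cancel₀ _ hb']
  · rintro ⟨c, rfl⟩
    exact ⟨c, by rw [map_mul, mul_div_cancel_left₀ _ hb']⟩

theorem isIntegral_of_pow_add_algebraMap_eq_zero {R A : Type*} [CommRing R] [Ring A] [Algebra R A]
    {t : A} {y : R} {n : ℕ} (hn : 0 < n) (h : t ^ n + algebraMap R A y = 0) : IsIntegral R t := by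
  refine IsIntegral.of_pow hn ?_
  rw [eq_neg_of_add_eq_zero_left h, ← map_neg]
  exact isIntegral_algebraMap

theorem not_isIntegrallyClosed_of_isIntegral_notMem_range {R K : Type*} [CommRing R] [Field K]
    [Algebra R K] [IsFractionRing R K] {t : K} (ht : IsIntegral R t)
    (hnot : t ∉ (algebraMap R K).range) : ¬ IsIntegrallyClosed R :=
  fun hR => hnot ((isIntegrallyClosed_iff K).mp hR ht)

theorem exists_isIntegral_notMem_range_of_pow_add_pow_mul_eq_zero {R K : Type*} [CommRing R]
    [Field K] [Algebra R K] [IsFractionRing R K] {a b y : R} {n : ℕ} (hn : 0 < n)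
    (hb : b ≠ 0) (hba : ¬ b ∣ a) (h : a ^ n + b ^ n * y = 0) :
    ∃ t : K, algebraMap R K b * t = algebraMap R K a ∧ t ^ n + algebraMap R K y = 0 ∧
      IsIntegral R t ∧ t ∉ (algebraMap R K).range := by
  have hb' : algebraMap R K b ≠ 0 := (map_ne_zero_iff _ (IsFractionRing.injective R K)).mpr hb
  have ht : (algebraMap R K a / algebraMap R K b) ^ n + algebraMap R K y = 0 := by
    have hK := congrArg (algebraMap R K) h
    simp only [map_add, map_mul, map_pow, map_zero] at hK
    rw [div_pow, div_add' _ _ _ (pow_ne_zero n hb'), div_eq_zero_iff]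
    exact Or.inl (by linear_combination hK)
  exact ⟨_, mul_div_cancel₀ _ hb', ht, isIntegral_of_pow_add_algebraMap_eq_zero hn ht,
    (IsFractionRing.div_mem_range_iff_dvd hb).not.mpr hba⟩

theorem quotient_domain_not_integrallyClosed_general
    (k : Type*) [Field k] (p : ℕ) (hp : p.Prime) :
    IsDomain (ExampleRing k p) ∧
      ¬ IsIntegrallyClosed (ExampleRing k p) ∧
      ∃ t : FractionRing (ExampleRing k p),
        (algebraMap (ExampleRing k p) (FractionRing (ExampleRing k p))
              (Ideal.Quotient.mk _ (X 1 : MvPolynomial (Fin 3) k)) * t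
            = algebraMap (ExampleRing k p) (FractionRing (ExampleRing k p))
              (Ideal.Quotient.mk _ (X 0 : MvPolynomial (Fin 3) k))) ∧
          t ^ p + algebraMap (ExampleRing k p) (FractionRing (ExampleRing k p))
              (Ideal.Quotient.mk _ (X 2 : MvPolynomial (Fin 3) k)) = 0 ∧
          IsIntegral (ExampleRing k p) t ∧
          t ∉ (algebraMap (ExampleRing k p) (FractionRing (ExampleRing k p))).range := by
  set f : MvPolynomial (Fin 3) k := X 0 ^ p + X 1 ^ p * X 2
  have hf : Prime f := prime_X_pow_add_X_pow_mul_X (by decide) (by decide) (by decide) p p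
  have : (Ideal.span {f}).IsPrime := (Ideal.span_singleton_prime hf.ne_zero).mpr hf
  have hb : Ideal.Quotient.mk (Ideal.span {f}) (X 1) ≠ 0 := by
    rw [Ne, Ideal.Quotient.eq_zero_iff_mem, Ideal.mem_span_singleton]
    intro hdvd
    simpa [f, hp.ne_zero] using map_dvd (eval ![0, 1, 0]) hdvd
  have hba : ¬ Ideal.Quotient.mk (Ideal.span {f}) (X 1) ∣ Ideal.Quotient.mk _ (X 0) := by
    let φ : MvPolynomial (Fin 3) k →+* Polynomial k :=
      eval₂Hom Polynomial.C ![Polynomial.X, 0, 0]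
    have hφf : φ f = Polynomial.X ^ p := by simp [φ, f, hp.ne_zero]
    refine Ideal.Quotient.not_mk_span_singleton_dvd φ (by simp [φ]) ?_
    rw [hφf, Polynomial.X_pow_dvd_iff]
    exact fun h => by simpa [φ] using h 1 hp.one_lt
  have hrel : Ideal.Quotient.mk (Ideal.span {f}) (X 0) ^ p
      + Ideal.Quotient.mk (Ideal.span {f}) (X 1) ^ p * Ideal.Quotient.mk _ (X 2) = 0 := by
    simp only [← map_pow, ← map_mul, ← map_add, Ideal.Quotient.eq_zero_iff_mem]
    exact Ideal.mem_span_singleton_self f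
  obtain ⟨t, ht⟩ := exists_isIntegral_notMem_range_of_pow_add_pow_mul_eq_zero
    (K := FractionRing (ExampleRing k p)) hp.pos hb hba hrel
  exact ⟨Ideal.Quotient.isDomain _,
    not_isIntegrallyClosed_of_isIntegral_notMem_range ht.2.2.1 ht.2.2.2, t, ht⟩

/-- Let `k` be a field of prime characteristic `p` and let
`R = k[a,b,y]/(a^p + b^p·y)`. Then `R` is an integral domain which is not integrally closed in
its fraction field: explicitly, the element `t = a/b` of `Frac(R)` (characterized by `b·t = a`)
satisfies `t^p + y = 0`, is integral over `R`, but does not lie in (the image of) `R`. -/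
theorem quotient_domain_not_integrallyClosed
    (k : Type*) [Field k] (p : ℕ) (hp : p.Prime) [CharP k p] :
    IsDomain (ExampleRing k p) ∧
      ¬ IsIntegrallyClosed (ExampleRing k p) ∧
      ∃ t : FractionRing (ExampleRing k p),
        (algebraMap (ExampleRing k p) (FractionRing (ExampleRing k p))
              (Ideal.Quotient.mk _ (X 1 : MvPolynomial (Fin 3) k)) * t
            = algebraMap (ExampleRing k p) (FractionRing (ExampleRing k p))
              (Ideal.Quotient.mk _ (X 0 : MvPolynomial (Fin 3) k))) ∧
          t ^ p + algebraMap (ExampleRing k p) (FractionRing (ExampleRing k p))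
              (Ideal.Quotient.mk _ (X 2 : MvPolynomial (Fin 3) k)) = 0 ∧
          IsIntegral (ExampleRing k p) t ∧
          t ∉ (algebraMap (ExampleRing k p) (FractionRing (ExampleRing k p))).range :=
  quotient_domain_not_integrallyClosed_general k p hp
end

section
/- Let k be a field of prime characteristic p and let R = k[a,b,y]/(a^p + b^p·y). Let P be the ideal of R generated by the images of a and b. Then P is a prime ideal of R of height 1, and the localization R_P is not a regular local ring (equivalently, R_P is not a discrete valuation ring). -/
open MvPolynomial

set_option synthInstance.maxHeartbeats 400000
set_option maxHeartbeats 1000000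

/-- The ideal `P = (a, b)` of `R = k[a,b,y]/(a^p + b^p·y)`. -/
noncomputable abbrev ExampleIdeal (k : Type*) [Field k] (p : ℕ) : Ideal (ExampleRing k p) :=
  Ideal.span {Ideal.Quotient.mk _ (X 0 : MvPolynomial (Fin 3) k),
    Ideal.Quotient.mk _ (X 1 : MvPolynomial (Fin 3) k)}

/-! `R` is a domain because `a^p + b^p y` is a primitive polynomial of degree one in `y` over the
UFD `k[a,b]`. The map `R → k[y]` killing `a` and `b` has kernel `P`, so `P` is prime, and since
`a^p = -b^p y` it is minimal over `(b)`; Krull's principal ideal theorem bounds its height by `1`.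
If `R_P` were a DVR, one of `a, b` would divide the other there, so `-y` or `-1/y` would be a
`p`-th power `c^p` in `R_P`. Writing `c = r/s` with `s ∉ P` and mapping to `k[y]` gives
`y u^p + v^p = 0` with `v ≠ 0` or `u ≠ 0`, which the degrees modulo `p` forbid. -/

theorem Ideal.not_exists_lt_lt_of_height_le_one {R : Type*} [CommRing R] {P : Ideal R}
    [P.IsPrime] (h : P.height ≤ 1) :
    ¬ ∃ Q₁ Q₂ : Ideal R, Q₁.IsPrime ∧ Q₂.IsPrime ∧ Q₁ < Q₂ ∧ Q₂ < P := by
  rintro ⟨Q₁, Q₂, hQ₁, hQ₂, h₁₂, h₂P⟩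
  have := Ideal.height_add_one_le_of_lt_of_isPrime h₁₂
  have := Ideal.height_add_one_le_of_lt_of_isPrime h₂P
  generalize Q₁.height = a, Q₂.height = b, P.height = c at *
  enat_to_nat
  omega

theorem ValuationRing.exists_add_pow_eq_zero_or_mul_pow_add_one_eq_zero {L : Type*} [CommRing L]
    [IsDomain L] [ValuationRing L] {n : ℕ} {a b y : L} (ha : a ≠ 0) (hb : b ≠ 0)
    (h : a ^ n + b ^ n * y = 0) : ∃ c : L, y + c ^ n = 0 ∨ y * c ^ n + 1 = 0 := by
  obtain ⟨c, rfl | rfl⟩ := ValuationRing.cond a b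
  · refine ⟨c, Or.inr ?_⟩
    have : a ^ n * (y * c ^ n + 1) = 0 := by linear_combination h
    exact (mul_eq_zero.mp this).resolve_left (pow_ne_zero n ha)
  · refine ⟨c, Or.inl ?_⟩
    have : b ^ n * (y + c ^ n) = 0 := by linear_combination h
    exact (mul_eq_zero.mp this).resolve_left (pow_ne_zero n hb)

theorem Polynomial.eq_zero_of_X_mul_pow_add_pow_eq_zero {R : Type*} [CommRing R] [IsDomain R]
    {n : ℕ} (hn : 2 ≤ n) {u v : Polynomial R} (h : X * u ^ n + v ^ n = 0) : u = 0 ∧ v = 0 := by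
  by_cases hu : u = 0
  · subst hu
    simp_all [zero_pow (by omega : n ≠ 0)]
  have hdeg := congrArg natDegree (eq_neg_of_add_eq_zero_left h)
  rw [natDegree_neg, natDegree_pow, natDegree_mul X_ne_zero (pow_ne_zero n hu), natDegree_pow,
    natDegree_X] at hdeg
  have := congrArg (· % n) hdeg
  simp [Nat.add_mul_mod_self_left, Nat.mod_eq_of_lt (by omega : 1 < n)] at this

namespace Localization.AtPrime

variable {R : Type*} [CommRing R] [IsDomain R] {P : Ideal R} [P.IsPrime] {n : ℕ} {y : R}

theorem add_pow_ne_zero_and_mul_pow_add_one_ne_zero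
    (hy : ∀ r s : R, y * r ^ n + s ^ n = 0 → r ∈ P ∧ s ∈ P) (c : Localization.AtPrime P) :
    algebraMap R _ y + c ^ n ≠ 0 ∧ algebraMap R _ y * c ^ n + 1 ≠ 0 := by
  obtain ⟨⟨r, s⟩, rfl⟩ := IsLocalization.mk'_surjective P.primeCompl c
  have hc := IsLocalization.mk'_spec (Localization.AtPrime P) r s
  have hinj := IsLocalization.injective (Localization.AtPrime P) P.primeCompl_le_nonZeroDivisors
  set f := algebraMap R (Localization.AtPrime P)
  constructor
  · intro h
    have : f (y * s ^ n + r ^ n) = f 0 := by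
      rw [map_add, map_mul, map_pow, map_pow, ← hc, map_zero]
      linear_combination f s ^ n * h
    exact s.2 (hy _ _ (hinj this)).1
  · intro h
    have : f (y * r ^ n + s ^ n) = f 0 := by
      rw [map_add, map_mul, map_pow, map_pow, ← hc, map_zero]
      linear_combination f s ^ n * h
    exact s.2 (hy _ _ (hinj this)).2

theorem not_isDiscreteValuationRing {a b : R} (ha : a ≠ 0) (hb : b ≠ 0)
    (h : a ^ n + b ^ n * y = 0) (hy : ∀ r s : R, y * r ^ n + s ^ n = 0 → r ∈ P ∧ s ∈ P) :
    ¬ IsDiscreteValuationRing (Localization.AtPrime P) := by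
  intro
  have hinj := IsLocalization.injective (Localization.AtPrime P) P.primeCompl_le_nonZeroDivisors
  set f := algebraMap R (Localization.AtPrime P)
  have hf : f a ^ n + f b ^ n * f y = 0 := by
    rw [← map_pow, ← map_pow, ← map_mul, ← map_add, h, map_zero]
  obtain ⟨c, hc | hc⟩ := ValuationRing.exists_add_pow_eq_zero_or_mul_pow_add_one_eq_zero
    ((map_ne_zero_iff f hinj).mpr ha) ((map_ne_zero_iff f hinj).mpr hb) hf
  exacts [(add_pow_ne_zero_and_mul_pow_add_one_ne_zero hy c).1 hc,
    (add_pow_ne_zero_and_mul_pow_add_one_ne_zero hy c).2 hc]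

end Localization.AtPrime

namespace ExampleRing

variable {k : Type*} [Field k] {p : ℕ}

noncomputable abbrev var (k : Type*) [Field k] (p : ℕ) (i : Fin 3) : ExampleRing k p :=
  Ideal.Quotient.mk _ (X i)

theorem var_relation : var k p 0 ^ p + var k p 1 ^ p * var k p 2 = 0 :=
  Ideal.Quotient.eq_zero_iff_mem.mpr (Ideal.subset_span rfl)

theorem prime_defining_polynomial :
    Prime (X 0 ^ p + X 1 ^ p * X 2 : MvPolynomial (Fin 3) k) := by
  let e := (renameEquiv k finSuccEquivLast).trans (optionEquivLeft k (Fin 2))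
  have he : e (X 0 ^ p + X 1 ^ p * X 2) =
      Polynomial.C (X 1 ^ p) * Polynomial.X + Polynomial.C (X 0 ^ p) := by
    have h0 : finSuccEquivLast (0 : Fin 3) = some 0 := rfl
    have h1 : finSuccEquivLast (1 : Fin 3) = some 1 := rfl
    have h2 : finSuccEquivLast (2 : Fin 3) = none := rfl
    simp [e, h0, h1, h2, optionEquivLeft_X_some, optionEquivLeft_X_none]
    ring
  have hcoprime : IsRelPrime (X 1 ^ p : MvPolynomial (Fin 2) k) (X 0 ^ p) :=
    .pow_left (.pow_right ((X_prime.irreducible.isRelPrime_iff_not_dvd).mpr (by simp)))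
  refine (MulEquiv.prime_iff e.toMulEquiv).mp ?_
  change Prime (e _)
  rw [he]
  exact (Polynomial.irreducible_C_mul_X_add_C (pow_ne_zero p (X_ne_zero 1)) hcoprime).prime

instance : IsDomain (ExampleRing k p) :=
  have := (Ideal.span_singleton_prime prime_defining_polynomial.ne_zero).mpr
    (prime_defining_polynomial (k := k) (p := p))
  Ideal.Quotient.isDomain _

theorem var_zero_mem : var k p 0 ∈ ExampleIdeal k p :=
  Ideal.subset_span (Set.mem_insert _ _)

theorem var_one_mem : var k p 1 ∈ ExampleIdeal k p :=
  Ideal.subset_span (Set.mem_insert_of_mem _ rfl)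

theorem var_zero_ne_zero (hp : 2 ≤ p) : var k p 0 ≠ 0 := by
  rw [Ne, Ideal.Quotient.eq_zero_iff_mem, Ideal.mem_span_singleton]
  intro h
  have hdvd : (Polynomial.X : Polynomial k) ^ p ∣ Polynomial.X := by
    simpa [zero_pow (by omega : p ≠ 0)] using map_dvd (aeval ![(Polynomial.X : Polynomial k), 0, 0]) h
  have := Polynomial.natDegree_le_of_dvd hdvd Polynomial.X_ne_zero
  rw [Polynomial.natDegree_X_pow, Polynomial.natDegree_X] at this
  omega

theorem var_one_ne_zero (hp : 2 ≤ p) : var k p 1 ≠ 0 := by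
  intro h
  have := var_relation (k := k) (p := p)
  rw [h, zero_pow (by omega), zero_mul, add_zero] at this
  exact var_zero_ne_zero hp (pow_eq_zero_iff (by omega) |>.mp this)

noncomputable def toPolynomial (hp : p ≠ 0) : ExampleRing k p →ₐ[k] Polynomial k :=
  Ideal.Quotient.liftₐ _ (aeval ![0, 0, Polynomial.X]) fun f hf => by
    obtain ⟨g, rfl⟩ := Ideal.mem_span_singleton'.mp hf
    simp [hp]

theorem toPolynomial_mk (hp : p ≠ 0) (f : MvPolynomial (Fin 3) k) :
    toPolynomial hp (Ideal.Quotient.mk _ f) = aeval ![0, 0, Polynomial.X] f :=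
  rfl

theorem ker_toPolynomial (hp : p ≠ 0) :
    RingHom.ker (toPolynomial (k := k) hp) = ExampleIdeal k p := by
  let π := Ideal.Quotient.mkₐ k (ExampleIdeal k p)
  have hsection : π.comp ((Polynomial.aeval (var k p 2)).comp (toPolynomial hp)) = π := by
    apply Ideal.Quotient.algHom_ext
    ext i
    fin_cases i <;> simp [toPolynomial_mk, π, eq_comm (a := (0 : _ ⧸ _)),
      Ideal.Quotient.eq_zero_iff_mem, var_zero_mem, var_one_mem]
  refine le_antisymm (fun x hx => ?_) ?_
  · have hπx := AlgHom.congr_fun hsection x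
    rw [AlgHom.comp_apply, AlgHom.comp_apply, RingHom.mem_ker.mp hx, map_zero, map_zero,
      eq_comm, Ideal.Quotient.mkₐ_eq_mk] at hπx
    exact Ideal.Quotient.eq_zero_iff_mem.mp hπx
  · rw [Ideal.span_le]
    rintro _ (rfl | rfl) <;> simp [toPolynomial_mk]

theorem isPrime_exampleIdeal (hp : p ≠ 0) : (ExampleIdeal k p).IsPrime :=
  ker_toPolynomial (k := k) hp ▸ RingHom.ker_isPrime _

theorem exampleIdeal_mem_minimalPrimes (hp : p ≠ 0) :
    ExampleIdeal k p ∈ (Ideal.span {var k p 1}).minimalPrimes := by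
  refine ⟨⟨isPrime_exampleIdeal hp, Ideal.span_le.mpr (by simpa using var_one_mem)⟩, ?_⟩
  rintro Q ⟨hQ, hbQ⟩ -
  have hb : var k p 1 ∈ Q := Ideal.span_le.mp hbQ rfl
  have ha : var k p 0 ∈ Q := by
    refine hQ.mem_of_pow_mem p ?_
    rw [eq_neg_of_add_eq_zero_left var_relation]
    exact Q.neg_mem (Q.mul_mem_right _ (Q.pow_mem_of_mem hb p (Nat.pos_of_ne_zero hp)))
  rw [Ideal.span_le]
  rintro _ (rfl | rfl)
  exacts [ha, hb]

theorem height_exampleIdeal_le_one (hp : p ≠ 0) : (ExampleIdeal k p).height ≤ 1 :=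
  Ideal.height_le_one_of_isPrincipal_of_mem_minimalPrimes _ _ (exampleIdeal_mem_minimalPrimes hp)

theorem mem_exampleIdeal_of_var_two_mul_pow_add_pow_eq_zero (hp : 2 ≤ p) {r s : ExampleRing k p}
    (h : var k p 2 * r ^ p + s ^ p = 0) : r ∈ ExampleIdeal k p ∧ s ∈ ExampleIdeal k p := by
  have hp0 : p ≠ 0 := by omega
  have hy : toPolynomial hp0 (var k p 2) = Polynomial.X := by simp [toPolynomial_mk]
  have := congrArg (toPolynomial hp0) h
  rw [map_add, map_mul, map_pow, map_pow, hy, map_zero] at this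
  simp only [← ker_toPolynomial hp0, RingHom.mem_ker]
  exact Polynomial.eq_zero_of_X_mul_pow_add_pow_eq_zero hp this

end ExampleRing

theorem localization_at_height_one_prime_not_regular_general
    (k : Type*) [Field k] (p : ℕ) (hp : p.Prime) :
    (ExampleIdeal k p).IsPrime ∧
      (∃ Q : Ideal (ExampleRing k p), Q.IsPrime ∧ Q < ExampleIdeal k p) ∧
      (¬ ∃ Q₁ Q₂ : Ideal (ExampleRing k p),
          Q₁.IsPrime ∧ Q₂.IsPrime ∧ Q₁ < Q₂ ∧ Q₂ < ExampleIdeal k p) ∧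
      (∀ (hP : (ExampleIdeal k p).IsPrime),
        haveI := hP
        ∃ h : IsDomain (Localization.AtPrime (ExampleIdeal k p)),
          ¬ @IsDiscreteValuationRing (Localization.AtPrime (ExampleIdeal k p)) _ h) := by
  have hP := ExampleRing.isPrime_exampleIdeal (k := k) hp.ne_zero
  have ha := ExampleRing.var_zero_ne_zero (k := k) hp.two_le
  refine ⟨hP, ⟨⊥, Ideal.isPrime_bot, ?_⟩, ?_, fun _ => ⟨inferInstance, ?_⟩⟩
  · exact bot_lt_iff_ne_bot.mpr ((Submodule.ne_bot_iff _).mpr ⟨_, ExampleRing.var_zero_mem, ha⟩)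
  · exact Ideal.not_exists_lt_lt_of_height_le_one
      (ExampleRing.height_exampleIdeal_le_one hp.ne_zero)
  · exact Localization.AtPrime.not_isDiscreteValuationRing ha
      (ExampleRing.var_one_ne_zero hp.two_le) ExampleRing.var_relation
      fun _ _ => ExampleRing.mem_exampleIdeal_of_var_two_mul_pow_add_pow_eq_zero hp.two_le

/-- Let `k` be a field of prime characteristic `p`, let
`R = k[a,b,y]/(a^p + b^p·y)` and let `P = (a,b) ⊆ R`. Then `P` is a prime ideal of height `1`
(there is a prime strictly below `P` but no chain of two primes strictly below `P`), and the
localization `R_P` is a domain which is not a discrete valuation ring (equivalently, the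
one-dimensional Noetherian local domain `R_P` is not regular). -/
theorem localization_at_height_one_prime_not_regular
    (k : Type*) [Field k] (p : ℕ) (hp : p.Prime) [CharP k p] :
    (ExampleIdeal k p).IsPrime ∧
      (∃ Q : Ideal (ExampleRing k p), Q.IsPrime ∧ Q < ExampleIdeal k p) ∧
      (¬ ∃ Q₁ Q₂ : Ideal (ExampleRing k p),
          Q₁.IsPrime ∧ Q₂.IsPrime ∧ Q₁ < Q₂ ∧ Q₂ < ExampleIdeal k p) ∧
      (∀ (hP : (ExampleIdeal k p).IsPrime),
        haveI := hP
        ∃ h : IsDomain (Localization.AtPrime (ExampleIdeal k p)),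
          ¬ @IsDiscreteValuationRing (Localization.AtPrime (ExampleIdeal k p)) _ h) :=
  localization_at_height_one_prime_not_regular_general k p hp
end

section
/- Let k be a field of prime characteristic p and let R = k[z₁,z₂,w₁,w₂]/(z₁·w₁^p + z₂·w₂^p) be the quotient of the polynomial ring in four variables by the principal ideal generated by z₁·w₁^p + z₂·w₂^p. Then R is an integral domain and R is not integrally closed in its field of fractions; explicitly, the element z₁·w₁/w₂ of Frac(R) is integral over R (it satisfies T^p + z₁^{p-1}·z₂ = 0) but does not lie in R. -/
/-!
Viewed as a polynomial in `z₁`, the relation `w₁^p·z₁ + z₂·w₂^p` is linear with coprime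
coefficients, hence prime, and `R` is a domain. Multiplying the relation by `z₁^{p-1}` gives
`(z₁w₁)^p + z₁^{p-1}z₂·w₂^p = 0`, so `t = z₁w₁/w₂` satisfies `t^p + z₁^{p-1}z₂ = 0`.
If `t` were in `R`, then `z₁w₁ ∈ w₂R`; this is refuted by the map `R → k[ε]`,
`(z₁, z₂, w₁, w₂) ↦ (1, 0, ε, 0)`, which is well defined because `ε^p = 0` for `p ≥ 2`,
kills `w₂` and sends `z₁w₁` to `ε ≠ 0`.
-/

open MvPolynomial

set_option synthInstance.maxHeartbeats 400000
set_option maxHeartbeats 1000000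

/-- The ring `R = k[z₁,z₂,w₁,w₂]/(z₁·w₁^p + z₂·w₂^p)`, where the variables `X 0, X 1, X 2, X 3`
of the polynomial ring play the roles of `z₁, z₂, w₁, w₂` respectively. -/
abbrev IncidenceRing (k : Type*) [Field k] (p : ℕ) : Type _ :=
  MvPolynomial (Fin 4) k ⧸
    Ideal.span {(X 0 * X 2 ^ p + X 1 * X 3 ^ p : MvPolynomial (Fin 4) k)}

theorem MvPolynomial.isRelPrime_X_X {σ R : Type*} [CommRing R] [IsDomain R] {i j : σ}
    (hij : i ≠ j) : IsRelPrime (X i : MvPolynomial σ R) (X j) :=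
  X_prime.irreducible.isRelPrime_iff_not_dvd.mpr (by rwa [X_dvd_X])

theorem DualNumber.eps_ne_zero {R : Type*} [Semiring R] [Nontrivial R] :
    (DualNumber.eps : DualNumber R) ≠ 0 :=
  fun h => one_ne_zero (α := R) (by simpa using congrArg TrivSqZeroExt.snd h)

theorem pow_add_eq_zero_of_mul_eq {K : Type*} [CommRing K] [IsDomain K] {w t a c : K} {n : ℕ}
    (hw : w ≠ 0) (h : w * t = a) (hrel : a ^ n + c * w ^ n = 0) : t ^ n + c = 0 := by
  have : w ^ n * (t ^ n + c) = 0 := by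
    rw [mul_add, ← mul_pow, h, ← hrel, mul_comm]
  exact (mul_eq_zero.mp this).resolve_left (pow_ne_zero n hw)

theorem notMem_range_algebraMap_of_mul_eq {R K S : Type*} [CommRing R] [CommRing K] [Algebra R K]
    [IsFractionRing R K] [Semiring S] (ψ : R →+* S) {w a : R} {t : K}
    (ht : algebraMap R K w * t = algebraMap R K a) (hw : ψ w = 0) (ha : ψ a ≠ 0) :
    t ∉ (algebraMap R K).range := by
  rintro ⟨r, rfl⟩
  rw [← map_mul] at ht
  rw [← IsFractionRing.injective R K ht, map_mul, hw, zero_mul] at ha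
  exact ha rfl

theorem prime_X_mul_X_pow_add_X_mul_X_pow {R : Type*} [CommRing R] [IsDomain R]
    [UniqueFactorizationMonoid R] (m n : ℕ) :
    Prime (X 0 * X 2 ^ m + X 1 * X 3 ^ n : MvPolynomial (Fin 4) R) := by
  have hlinear : finSuccEquiv R 3 (X 0 * X 2 ^ m + X 1 * X 3 ^ n) =
      Polynomial.C (X 1 ^ m) * Polynomial.X + Polynomial.C (X 0 * X 2 ^ n) := by
    simp only [map_add, map_mul, map_pow, finSuccEquiv_X_zero]
    rw [show (1 : Fin 4) = (0 : Fin 3).succ from rfl, show (2 : Fin 4) = (1 : Fin 3).succ from rfl,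
      show (3 : Fin 4) = (2 : Fin 3).succ from rfl]
    simp only [finSuccEquiv_X_succ]
    ring
  have hcoprime : IsRelPrime (X 1 ^ m : MvPolynomial (Fin 3) R) (X 0 * X 2 ^ n) :=
    ((isRelPrime_X_X (by decide)).mul_right (isRelPrime_X_X (by decide)).pow_right).pow_left
  rw [← UniqueFactorizationMonoid.irreducible_iff_prime,
    ← MulEquiv.irreducible_iff (finSuccEquiv R 3).toMulEquiv]
  change Irreducible (finSuccEquiv R 3 _)
  rw [hlinear]
  exact Polynomial.irreducible_C_mul_X_add_C (pow_ne_zero m (X_ne_zero 1)) hcoprime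

instance (k : Type*) [Field k] (p : ℕ) : IsDomain (IncidenceRing k p) :=
  (Ideal.Quotient.isDomain_iff_prime _).mpr <|
    (Ideal.span_singleton_prime (prime_X_mul_X_pow_add_X_mul_X_pow p p).ne_zero).mpr
      (prime_X_mul_X_pow_add_X_mul_X_pow p p)

namespace IncidenceRing

variable {k : Type*} [Field k] {p : ℕ}

noncomputable def eval {S : Type*} [CommRing S] [Algebra k S] (x : Fin 4 → S)
    (hx : x 0 * x 2 ^ p + x 1 * x 3 ^ p = 0) : IncidenceRing k p →+* S :=
  Ideal.Quotient.lift _ (aeval x).toRingHom fun g hg => by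
    obtain ⟨c, rfl⟩ := Ideal.mem_span_singleton'.mp hg
    simp [hx]

@[simp]
theorem eval_mk {S : Type*} [CommRing S] [Algebra k S] (x : Fin 4 → S)
    (hx : x 0 * x 2 ^ p + x 1 * x 3 ^ p = 0) (g : MvPolynomial (Fin 4) k) :
    eval x hx (Ideal.Quotient.mk _ g) = aeval x g :=
  rfl

theorem mk_X_three_ne_zero : (Ideal.Quotient.mk _ (X 3) : IncidenceRing k p) ≠ 0 :=
  ne_zero_of_map (f := eval (S := k) ![0, 0, 0, 1] (by simp)) (by simp)

theorem mk_pow_add_mk_mul_mk_pow (hp : 0 < p) :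
    (Ideal.Quotient.mk _ (X 0 * X 2) : IncidenceRing k p) ^ p +
      Ideal.Quotient.mk _ (X 0 ^ (p - 1) * X 1) * Ideal.Quotient.mk _ (X 3) ^ p = 0 := by
  have hrel : (Ideal.Quotient.mk _ (X 0 * X 2 ^ p + X 1 * X 3 ^ p) : IncidenceRing k p) = 0 :=
    Ideal.Quotient.eq_zero_iff_mem.mpr (Ideal.mem_span_singleton_self _)
  obtain ⟨q, rfl⟩ := Nat.exists_eq_add_of_lt hp
  simp only [← map_pow, ← map_mul, ← map_add, zero_add, add_tsub_cancel_right] at hrel ⊢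
  rw [show (X 0 * X 2) ^ (q + 1) + X 0 ^ q * X 1 * X 3 ^ (q + 1) =
      X 0 ^ q * (X 0 * X 2 ^ (q + 1) + X 1 * X 3 ^ (q + 1) : MvPolynomial (Fin 4) k) by ring,
    map_mul, hrel, mul_zero]

noncomputable def evalDualNumber (hp : 2 ≤ p) : IncidenceRing k p →+* DualNumber k :=
  eval ![1, 0, DualNumber.eps, 0] (by
    obtain ⟨q, rfl⟩ := Nat.exists_eq_add_of_le hp
    simp [pow_add, DualNumber.eps_pow_two])

end IncidenceRing

theorem incidence_ring_domain_not_integrallyClosed_general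
    (k : Type*) [Field k] (p : ℕ) (hp : p.Prime) :
    IsDomain (IncidenceRing k p) ∧
      ¬ IsIntegrallyClosed (IncidenceRing k p) ∧
      ∃ t : FractionRing (IncidenceRing k p),
        (algebraMap (IncidenceRing k p) (FractionRing (IncidenceRing k p))
              (Ideal.Quotient.mk _ (X 3 : MvPolynomial (Fin 4) k)) * t
            = algebraMap (IncidenceRing k p) (FractionRing (IncidenceRing k p))
              (Ideal.Quotient.mk _ (X 0 * X 2 : MvPolynomial (Fin 4) k))) ∧
          t ^ p + algebraMap (IncidenceRing k p) (FractionRing (IncidenceRing k p))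
              (Ideal.Quotient.mk _ (X 0 ^ (p - 1) * X 1 : MvPolynomial (Fin 4) k)) = 0 ∧
          IsIntegral (IncidenceRing k p) t ∧
          t ∉ (algebraMap (IncidenceRing k p) (FractionRing (IncidenceRing k p))).range := by
  set φ := algebraMap (IncidenceRing k p) (FractionRing (IncidenceRing k p))
  have hw : φ (Ideal.Quotient.mk _ (X 3)) ≠ 0 :=
    (map_ne_zero_iff φ (IsFractionRing.injective _ _)).mpr IncidenceRing.mk_X_three_ne_zero
  set t := φ (Ideal.Quotient.mk _ (X 0 * X 2)) / φ (Ideal.Quotient.mk _ (X 3))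
  have hmul : φ (Ideal.Quotient.mk _ (X 3)) * t = φ (Ideal.Quotient.mk _ (X 0 * X 2)) :=
    mul_div_cancel₀ _ hw
  have hpow : t ^ p + φ (Ideal.Quotient.mk _ (X 0 ^ (p - 1) * X 1)) = 0 :=
    pow_add_eq_zero_of_mul_eq hw hmul <| by
      simpa only [map_pow, map_mul, map_add, map_zero] using
        congrArg φ (IncidenceRing.mk_pow_add_mk_mul_mk_pow (k := k) hp.pos)
  have hint : IsIntegral (IncidenceRing k p) t := by
    refine IsIntegral.of_pow hp.pos ?_
    rw [eq_neg_of_add_eq_zero_left hpow, ← map_neg]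
    exact isIntegral_algebraMap
  have hnotMem : t ∉ φ.range :=
    notMem_range_algebraMap_of_mul_eq (IncidenceRing.evalDualNumber hp.two_le) hmul
      (by simp [IncidenceRing.evalDualNumber])
      (by simpa [IncidenceRing.evalDualNumber] using DualNumber.eps_ne_zero)
  exact ⟨inferInstance, fun _ => hnotMem (IsIntegrallyClosed.isIntegral_iff.mp hint),
    t, hmul, hpow, hint, hnotMem⟩

/-- Let `k` be a field of prime characteristic `p` and let
`R = k[z₁,z₂,w₁,w₂]/(z₁·w₁^p + z₂·w₂^p)`. Then `R` is an integral domain which is not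
integrally closed in its fraction field: explicitly, the element `t = z₁·w₁/w₂` of `Frac(R)`
(characterized by `w₂·t = z₁·w₁`) satisfies `t^p + z₁^{p-1}·z₂ = 0`, is integral over `R`,
but does not lie in (the image of) `R`. -/
theorem incidence_ring_domain_not_integrallyClosed
    (k : Type*) [Field k] (p : ℕ) (hp : p.Prime) [CharP k p] :
    IsDomain (IncidenceRing k p) ∧
      ¬ IsIntegrallyClosed (IncidenceRing k p) ∧
      ∃ t : FractionRing (IncidenceRing k p),
        (algebraMap (IncidenceRing k p) (FractionRing (IncidenceRing k p))
              (Ideal.Quotient.mk _ (X 3 : MvPolynomial (Fin 4) k)) * t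
            = algebraMap (IncidenceRing k p) (FractionRing (IncidenceRing k p))
              (Ideal.Quotient.mk _ (X 0 * X 2 : MvPolynomial (Fin 4) k))) ∧
          t ^ p + algebraMap (IncidenceRing k p) (FractionRing (IncidenceRing k p))
              (Ideal.Quotient.mk _ (X 0 ^ (p - 1) * X 1 : MvPolynomial (Fin 4) k)) = 0 ∧
          IsIntegral (IncidenceRing k p) t ∧
          t ∉ (algebraMap (IncidenceRing k p) (FractionRing (IncidenceRing k p))).range :=
  incidence_ring_domain_not_integrallyClosed_general k p hp
end
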